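/- arXiv:1511.02367 — 6 statements merged into one kernel-verified Lean document; each statement's English description precedes it below -/
import Mathlib

section
/- Let f, g : ℝ → ℍ be constant-speed geodesic segments in the hyperbolic plane, i.e. there are real constants a, b ≥ 0 such that dist(f s, f t) = a·|s − t| and dist(g s, g t) = b·|s − t| for all s, t ∈ [0,1]. Then for every λ ∈ [0,1], dist(f λ, g λ) ≤ (1 − λ)·dist(f 0, g 0) + λ·dist(f 1, g 1); that is, the function t ↦ dist(f t, g t) is convex on [0,1]. -/
open UpperHalfPlane

section
noncomputable section
namespace HypAux
open Real

lemma ratio_dist_eq {z w z' w' : UpperHalfPlane}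
    (h : Complex.normSq ((z:ℂ) - w) * (z'.im * w'.im)
       = Complex.normSq ((z':ℂ) - w') * (z.im * w.im)) :
    dist z w = dist z' w' := by
  have h1 : (0:ℝ) < z.im * w.im := mul_pos z.im_pos w.im_pos
  have h2 : (0:ℝ) < z'.im * w'.im := mul_pos z'.im_pos w'.im_pos
  rw [UpperHalfPlane.dist_eq, UpperHalfPlane.dist_eq]
  congr 1
  congr 1
  have e1 : (0:ℝ) ≤ dist (z:ℂ) w / (2 * √(z.im * w.im)) := by positivity
  have e2 : (0:ℝ) ≤ dist (z':ℂ) w' / (2 * √(z'.im * w'.im)) := by positivity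
  rw [← sq_eq_sq₀ e1 e2, div_pow, div_pow, mul_pow, mul_pow, sq_sqrt h1.le, sq_sqrt h2.le,
    Complex.dist_eq, Complex.sq_norm, Complex.dist_eq, Complex.sq_norm]
  rw [div_eq_div_iff (by positivity) (by positivity)]
  ring_nf
  nlinarith [h]

lemma coe_sub_ofReal_ne (z : UpperHalfPlane) (s : ℝ) : (z:ℂ) - s ≠ 0 := by
  intro h
  have := congrArg Complex.im h
  simp only [Complex.sub_im, Complex.ofReal_im, UpperHalfPlane.coe_im, Complex.zero_im,
    sub_zero] at this
  exact z.im_ne_zero this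

/-- The Möbius inversion `z ↦ -1/(z-s)` as a self-map of `ℍ`. -/
def invS (s : ℝ) (z : UpperHalfPlane) : UpperHalfPlane :=
  UpperHalfPlane.mk (-((z:ℂ) - s)⁻¹) (by
    have hz := coe_sub_ofReal_ne z s
    have : (-((z:ℂ) - s)⁻¹).im = z.im / Complex.normSq ((z:ℂ) - s) := by
      rw [Complex.neg_im, Complex.inv_im]
      simp [UpperHalfPlane.coe_im, neg_div]
    rw [this]
    exact div_pos z.im_pos (Complex.normSq_pos.mpr hz))

@[simp] lemma invS_coe (s : ℝ) (z : UpperHalfPlane) : (invS s z : ℂ) = -((z:ℂ) - s)⁻¹ := rfl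

lemma invS_im (s : ℝ) (z : UpperHalfPlane) :
    (invS s z).im = z.im / Complex.normSq ((z:ℂ) - s) := by
  have : (invS s z).im = (-((z:ℂ) - s)⁻¹).im := rfl
  rw [this, Complex.neg_im, Complex.inv_im]
  simp [UpperHalfPlane.coe_im, neg_div]

lemma invS_re (s : ℝ) (z : UpperHalfPlane) :
    (invS s z).re = (s - z.re) / Complex.normSq ((z:ℂ) - s) := by
  have : (invS s z).re = (-((z:ℂ) - s)⁻¹).re := rfl
  rw [this, Complex.neg_re, Complex.inv_re]
  simp only [Complex.sub_re, Complex.ofReal_re, UpperHalfPlane.coe_re]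
  ring

/-- The inverse map `w ↦ s - 1/w`. -/
def backS (s : ℝ) (w : UpperHalfPlane) : UpperHalfPlane :=
  UpperHalfPlane.mk ((s:ℂ) - (w:ℂ)⁻¹) (by
    have : ((s:ℂ) - (w:ℂ)⁻¹).im = w.im / Complex.normSq (w:ℂ) := by
      rw [Complex.sub_im, Complex.inv_im]
      simp [UpperHalfPlane.coe_im, neg_div]
    rw [this]
    exact div_pos w.im_pos (Complex.normSq_pos.mpr w.ne_zero))

@[simp] lemma backS_coe (s : ℝ) (w : UpperHalfPlane) : (backS s w : ℂ) = (s:ℂ) - (w:ℂ)⁻¹ := rfl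

lemma backS_im (s : ℝ) (w : UpperHalfPlane) :
    (backS s w).im = w.im / Complex.normSq (w:ℂ) := by
  have : (backS s w).im = ((s:ℂ) - (w:ℂ)⁻¹).im := rfl
  rw [this, Complex.sub_im, Complex.inv_im]
  simp [UpperHalfPlane.coe_im, neg_div]

lemma backS_invS (s : ℝ) (z : UpperHalfPlane) : backS s (invS s z) = z := by
  apply UpperHalfPlane.ext
  rw [backS_coe, invS_coe, inv_neg, inv_inv]
  ring

lemma invS_isom (s : ℝ) (z w : UpperHalfPlane) : dist (invS s z) (invS s w) = dist z w := by
  apply ratio_dist_eq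
  have hz := coe_sub_ofReal_ne z s
  have hw := coe_sub_ofReal_ne w s
  have key : (invS s z : ℂ) - (invS s w : ℂ) = ((z:ℂ) - w) / (((z:ℂ) - s) * ((w:ℂ) - s)) := by
    rw [invS_coe, invS_coe]
    field_simp
    ring
  rw [key, Complex.normSq_div, Complex.normSq_mul, invS_im, invS_im]
  have h1 : Complex.normSq ((z:ℂ) - s) ≠ 0 := (Complex.normSq_pos.mpr hz).ne'
  have h2 : Complex.normSq ((w:ℂ) - s) ≠ 0 := (Complex.normSq_pos.mpr hw).ne'
  field_simp

lemma backS_isom (s : ℝ) (z w : UpperHalfPlane) : dist (backS s z) (backS s w) = dist z w := by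
  apply ratio_dist_eq
  have hz := z.ne_zero
  have hw := w.ne_zero
  have key : (backS s z : ℂ) - (backS s w : ℂ) = ((z:ℂ) - w) / ((z:ℂ) * (w:ℂ)) := by
    rw [backS_coe, backS_coe]
    field_simp
    ring
  rw [key, Complex.normSq_div, Complex.normSq_mul, backS_im, backS_im]
  have h1 : Complex.normSq (z:ℂ) ≠ 0 := (Complex.normSq_pos.mpr hz).ne'
  have h2 : Complex.normSq (w:ℂ) ≠ 0 := (Complex.normSq_pos.mpr hw).ne'
  field_simp

-- continuing in namespace HypAux (appended to s1 for testing)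
/-- vertical midpoint -/
def vmid (x y : UpperHalfPlane) : UpperHalfPlane :=
  UpperHalfPlane.mk ((x.re : ℂ) + (√(x.im * y.im) : ℝ) * Complex.I) (by
    simp only [Complex.add_im, Complex.ofReal_im, Complex.mul_im, Complex.ofReal_re,
      Complex.I_im, Complex.I_re, mul_zero, mul_one, zero_add, add_zero]
    have : (0:ℝ) < x.im * y.im := mul_pos x.im_pos y.im_pos
    positivity)

lemma vmid_re (x y : UpperHalfPlane) : (vmid x y).re = x.re := by
  have : (vmid x y).re = ((x.re : ℂ) + (√(x.im * y.im) : ℝ) * Complex.I).re := rfl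
  rw [this]; simp

lemma vmid_im (x y : UpperHalfPlane) : (vmid x y).im = √(x.im * y.im) := by
  have : (vmid x y).im = ((x.re : ℂ) + (√(x.im * y.im) : ℝ) * Complex.I).im := rfl
  rw [this]; simp

lemma log_vmid (x y : UpperHalfPlane) :
    Real.log ((vmid x y).im) = (Real.log x.im + Real.log y.im) / 2 := by
  rw [vmid_im, Real.log_sqrt (by positivity), Real.log_mul x.im_ne_zero y.im_ne_zero]

lemma dist_vmid_left (x y : UpperHalfPlane) (h : x.re = y.re) :
    dist x (vmid x y) = dist x y / 2 := by
  rw [UpperHalfPlane.dist_of_re_eq (by rw [vmid_re]), UpperHalfPlane.dist_of_re_eq h,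
    log_vmid, Real.dist_eq, Real.dist_eq,
    show Real.log x.im - (Real.log x.im + Real.log y.im) / 2
        = (Real.log x.im - Real.log y.im) / 2 by ring, abs_div]
  norm_num

lemma dist_vmid_right (x y : UpperHalfPlane) (h : x.re = y.re) :
    dist (vmid x y) y = dist x y / 2 := by
  rw [UpperHalfPlane.dist_of_re_eq (by rw [vmid_re, h]), UpperHalfPlane.dist_of_re_eq h,
    log_vmid, Real.dist_eq, Real.dist_eq,
    show (Real.log x.im + Real.log y.im) / 2 - Real.log y.im
        = (Real.log x.im - Real.log y.im) / 2 by ring, abs_div]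
  norm_num

lemma exists_invS_re_eq {x y : UpperHalfPlane} (hxy : x.re ≠ y.re) :
    ∃ s : ℝ, (invS s x).re = (invS s y).re := by
  set c : ℝ := (x.re ^ 2 + x.im ^ 2 - y.re ^ 2 - y.im ^ 2) / (2 * (x.re - y.re)) with hc
  have hsub : x.re - y.re ≠ 0 := sub_ne_zero.mpr hxy
  have hcirc : (x.re - c) ^ 2 + x.im ^ 2 = (y.re - c) ^ 2 + y.im ^ 2 := by
    have hc2 : c * (2 * (x.re - y.re)) = x.re ^ 2 + x.im ^ 2 - y.re ^ 2 - y.im ^ 2 := by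
      rw [hc]; exact div_mul_cancel₀ _ (mul_ne_zero two_ne_zero hsub)
    linear_combination (-1 : ℝ) * hc2
  set r : ℝ := √((x.re - c) ^ 2 + x.im ^ 2) with hr
  have hrpos : 0 < r := by
    rw [hr]; apply Real.sqrt_pos.mpr; have := x.im_pos; positivity
  have hr2 : r ^ 2 = (x.re - c) ^ 2 + x.im ^ 2 := Real.sq_sqrt (by positivity)
  refine ⟨c + r, ?_⟩
  have key : ∀ z : UpperHalfPlane, (z.re - c) ^ 2 + z.im ^ 2 = r ^ 2 →
      (invS (c + r) z).re = 1 / (2 * r) := by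
    intro z hz
    have hns : Complex.normSq ((z:ℂ) - ((c + r : ℝ) : ℂ)) = 2 * r * ((c + r) - z.re) := by
      rw [Complex.normSq_apply]
      simp only [Complex.sub_re, Complex.sub_im, Complex.ofReal_re, Complex.ofReal_im,
        UpperHalfPlane.coe_re, UpperHalfPlane.coe_im, sub_zero]
      nlinarith [hz]
    have hpos : 0 < Complex.normSq ((z:ℂ) - ((c + r : ℝ) : ℂ)) :=
      Complex.normSq_pos.mpr (coe_sub_ofReal_ne z (c + r))
    have hcz : 0 < (c + r) - z.re := by nlinarith [hns, hpos, hrpos]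
    rw [invS_re, hns]
    rw [div_eq_div_iff (by positivity) (by positivity)]
    ring
  rw [key x (by nlinarith [hr2]), key y (by nlinarith [hr2, hcirc])]

lemma midpoint_exists (x y : UpperHalfPlane) :
    ∃ m : UpperHalfPlane, dist x m = dist x y / 2 ∧ dist m y = dist x y / 2 := by
  by_cases h : x.re = y.re
  · exact ⟨vmid x y, dist_vmid_left x y h, dist_vmid_right x y h⟩
  · obtain ⟨s, hs⟩ := exists_invS_re_eq h
    refine ⟨backS s (vmid (invS s x) (invS s y)), ?_, ?_⟩
    · calc dist x (backS s (vmid (invS s x) (invS s y)))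
          = dist (backS s (invS s x)) (backS s (vmid (invS s x) (invS s y))) := by
            rw [backS_invS]
        _ = dist (invS s x) (vmid (invS s x) (invS s y)) := backS_isom _ _ _
        _ = dist (invS s x) (invS s y) / 2 := dist_vmid_left _ _ hs
        _ = dist x y / 2 := by rw [invS_isom]
    · calc dist (backS s (vmid (invS s x) (invS s y))) y
          = dist (backS s (vmid (invS s x) (invS s y))) (backS s (invS s y)) := by
            rw [backS_invS]
        _ = dist (vmid (invS s x) (invS s y)) (invS s y) := backS_isom _ _ _
        _ = dist (invS s x) (invS s y) / 2 := dist_vmid_right _ _ hs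
        _ = dist x y / 2 := by rw [invS_isom]
lemma cosh_half_dist_vert (x y : UpperHalfPlane) (h : x.re = y.re) :
    Real.cosh (dist x y / 2) = (x.im + y.im) / (2 * √(x.im * y.im)) := by
  rw [UpperHalfPlane.cosh_half_dist]
  congr 1
  have hxy : (x:ℂ) - (starRingEnd ℂ) (y:ℂ) = ((x.im + y.im : ℝ) : ℂ) * Complex.I := by
    apply Complex.ext <;>
      simp [Complex.sub_re, Complex.sub_im, UpperHalfPlane.coe_re, UpperHalfPlane.coe_im, h]
  rw [Complex.dist_eq, hxy]
  rw [norm_mul, Complex.norm_I, mul_one, Complex.norm_real, Real.norm_eq_abs]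
  have := x.im_pos; have := y.im_pos
  rw [abs_of_pos (by positivity)]

lemma sq_dist_coe (z w : UpperHalfPlane) :
    dist (z:ℂ) (w:ℂ) ^ 2 = (z.re - w.re) ^ 2 + (z.im - w.im) ^ 2 := by
  rw [Complex.dist_eq, Complex.sq_norm, Complex.normSq_apply]
  simp only [Complex.sub_re, Complex.sub_im, UpperHalfPlane.coe_re, UpperHalfPlane.coe_im]
  ring

set_option maxHeartbeats 1000000 in
lemma median_vertical (x y m : UpperHalfPlane) (hre : x.re = y.re)
    (h1 : dist x m = dist x y / 2) (h2 : dist m y = dist x y / 2) (p : UpperHalfPlane) :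
    Real.cosh (dist p m) * (2 * Real.cosh (dist x y / 2))
      = Real.cosh (dist p x) + Real.cosh (dist p y) := by
  obtain ⟨pp, hpp0, hpp⟩ : ∃ pp : ℝ, 0 < pp ∧ pp ^ 2 = x.im :=
    ⟨√x.im, Real.sqrt_pos.mpr x.im_pos, Real.sq_sqrt x.im_pos.le⟩
  obtain ⟨q, hq0, hq⟩ : ∃ q : ℝ, 0 < q ∧ q ^ 2 = y.im :=
    ⟨√y.im, Real.sqrt_pos.mpr y.im_pos, Real.sq_sqrt y.im_pos.le⟩
  have hR : √(x.im * y.im) = pp * q := by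
    rw [← hpp, ← hq, show pp ^ 2 * q ^ 2 = (pp * q) ^ 2 by ring,
      Real.sqrt_sq (by positivity)]
  have hch : Real.cosh (dist x y / 2) = (pp ^ 2 + q ^ 2) / (2 * (pp * q)) := by
    rw [cosh_half_dist_vert x y hre, hR, hpp, hq]
  have E1 : Real.cosh (dist x m) = (pp ^ 2 + q ^ 2) / (2 * (pp * q)) := by
    rw [h1, ← hch]
  have E2 : Real.cosh (dist m y) = (pp ^ 2 + q ^ 2) / (2 * (pp * q)) := by
    rw [h2, ← hch]
  rw [UpperHalfPlane.cosh_dist, sq_dist_coe] at E1 E2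
  have hv0 : 0 < m.im := m.im_pos
  rw [← hpp] at E1
  rw [← hq] at E2
  rw [← hre] at E2
  field_simp at E1 E2
  -- E1 : (2*pp^2*m.im + ((x.re-m.re)^2 + (pp^2-m.im)^2)) * (2*(pp*q)) = (pp^2+q^2)*(2*pp^2*m.im)
  -- E2 : (2*m.im*q^2 + ((m.re-x.re)^2 + (m.im-q^2)^2)) * (2*(pp*q)) = (pp^2+q^2)*(2*m.im*q^2)
  have hu : m.re = x.re ∧ m.im = pp * q := by
    by_cases hPQ : pp = q
    · subst hPQ
      have hz : ((x.re - m.re) ^ 2 + (pp ^ 2 - m.im) ^ 2) * (2 * pp ^ 2) = 0 := by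
        linear_combination (2 * pp) * E1
      have hz' : (x.re - m.re) ^ 2 + (pp ^ 2 - m.im) ^ 2 = 0 := by
        have h2 : (0:ℝ) < 2 * pp ^ 2 := by positivity
        exact (mul_eq_zero.mp hz).resolve_right h2.ne'
      constructor
      · have : (x.re - m.re) ^ 2 = 0 := by nlinarith [sq_nonneg (x.re - m.re), sq_nonneg (pp ^ 2 - m.im)]
        have := pow_eq_zero_iff (n := 2) (by norm_num) |>.mp this
        linarith [sub_eq_zero.mp this]
      · have : (pp ^ 2 - m.im) ^ 2 = 0 := by nlinarith [sq_nonneg (x.re - m.re), sq_nonneg (pp ^ 2 - m.im)]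
        have := pow_eq_zero_iff (n := 2) (by norm_num) |>.mp this
        have := sub_eq_zero.mp this
        nlinarith [this]
    · have hfact : (pp ^ 2 - q ^ 2) * (pp ^ 2 + q ^ 2) * (pp * q - m.im) = 0 := by
        linear_combination pp * E1 - q * E2
      have h1 : pp ^ 2 - q ^ 2 ≠ 0 := by
        intro h
        have : pp = q := by nlinarith [sq_nonneg (pp - q), sq_nonneg (pp + q)]
        exact hPQ this
      have h2 : pp ^ 2 + q ^ 2 ≠ 0 := by positivity
      have hv : m.im = pp * q := by
        have := (mul_eq_zero.mp hfact).resolve_left (mul_ne_zero h1 h2)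
        linarith [sub_eq_zero.mp this]
      refine ⟨?_, hv⟩
      rw [hv] at E1
      have hz : (x.re - m.re) ^ 2 * (2 * (pp * q)) = 0 := by linear_combination (2 * pp) * E1
      have hz' : (x.re - m.re) ^ 2 = 0 := by
        have h3 : (0:ℝ) < 2 * (pp * q) := by positivity
        exact (mul_eq_zero.mp hz).resolve_right h3.ne'
      have := pow_eq_zero_iff (n := 2) (by norm_num) |>.mp hz'
      linarith [sub_eq_zero.mp this]
  obtain ⟨hmre, hmim⟩ := hu
  rw [UpperHalfPlane.cosh_dist, UpperHalfPlane.cosh_dist, UpperHalfPlane.cosh_dist,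
    sq_dist_coe, sq_dist_coe, sq_dist_coe, hch, hmre, hmim, ← hre, ← hpp, ← hq]
  have hpi : 0 < p.im := p.im_pos
  field_simp
  ring
lemma median (x y m : UpperHalfPlane)
    (h1 : dist x m = dist x y / 2) (h2 : dist m y = dist x y / 2) (p : UpperHalfPlane) :
    Real.cosh (dist p m) * (2 * Real.cosh (dist x y / 2))
      = Real.cosh (dist p x) + Real.cosh (dist p y) := by
  by_cases hre : x.re = y.re
  · exact median_vertical x y m hre h1 h2 p
  · obtain ⟨s, hs⟩ := exists_invS_re_eq hre
    have := median_vertical (invS s x) (invS s y) (invS s m) hs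
      (by rw [invS_isom, invS_isom, h1]) (by rw [invS_isom, invS_isom, h2]) (invS s p)
    rwa [invS_isom, invS_isom, invS_isom, invS_isom] at this

lemma cosh_half_sq (A : ℝ) : Real.cosh A + 1 = 2 * Real.cosh (A/2) ^ 2 := by
  have ht : Real.cosh A = Real.cosh (A/2) ^ 2 + Real.sinh (A/2) ^ 2 := by
    rw [← Real.cosh_two_mul]; congr 1; ring
  have hs := Real.sinh_sq (A/2)
  linarith

lemma key_ineq {A B C : ℝ} (hA : 0 ≤ A) (hB : 0 ≤ B) (hC : 0 ≤ C)
    (h1 : A ≤ B + C) (h2 : |B - C| ≤ A) :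
    Real.cosh A + Real.cosh B + Real.cosh C + 1
      ≤ 4 * Real.cosh (A/2) * Real.cosh (B/2) * Real.cosh (C/2) := by
  have e1 : Real.cosh B = Real.cosh ((B+C)/2) * Real.cosh ((B-C)/2)
      + Real.sinh ((B+C)/2) * Real.sinh ((B-C)/2) := by
    rw [← Real.cosh_add]; congr 1; ring
  have e2 : Real.cosh C = Real.cosh ((B+C)/2) * Real.cosh ((B-C)/2)
      - Real.sinh ((B+C)/2) * Real.sinh ((B-C)/2) := by
    rw [← Real.cosh_sub]; congr 1; ring
  have e3 := cosh_half_sq A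
  have e4 : Real.cosh ((B+C)/2) + Real.cosh ((B-C)/2)
      = 2 * Real.cosh (B/2) * Real.cosh (C/2) := by
    rw [show (B+C)/2 = B/2 + C/2 by ring, show (B-C)/2 = B/2 - C/2 by ring,
      Real.cosh_add, Real.cosh_sub]
    ring
  have f1 : Real.cosh (A/2) ≤ Real.cosh ((B+C)/2) := by
    rw [Real.cosh_le_cosh, abs_of_nonneg (by linarith), abs_of_nonneg (by linarith)]
    linarith
  have f2 : Real.cosh ((B-C)/2) ≤ Real.cosh (A/2) := by
    rw [Real.cosh_le_cosh, abs_of_nonneg (by positivity : (0:ℝ) ≤ A/2)]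
    calc |(B-C)/2| = |B-C|/2 := by rw [abs_div]; norm_num
      _ ≤ A/2 := by linarith
  have e5 : 4 * Real.cosh (A/2) * Real.cosh (B/2) * Real.cosh (C/2)
      = 2 * Real.cosh (A/2) * (Real.cosh ((B+C)/2) + Real.cosh ((B-C)/2)) := by
    linear_combination (2 * Real.cosh (A/2)) * e4.symm
  nlinarith [mul_nonneg (sub_nonneg.mpr f1) (sub_nonneg.mpr f2), e5]

lemma dist_mid_le (x y z m1 m2 : UpperHalfPlane)
    (h1 : dist x m1 = dist x y / 2) (h2 : dist m1 y = dist x y / 2)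
    (h3 : dist x m2 = dist x z / 2) (h4 : dist m2 z = dist x z / 2) :
    dist m1 m2 ≤ dist y z / 2 := by
  have A := median x z m2 h3 h4 m1
  have B := median x y m1 h1 h2 z
  have hx1 : Real.cosh (dist m1 x) = Real.cosh (dist x y / 2) := by
    rw [dist_comm m1 x, h1]
  rw [hx1] at A
  rw [show Real.cosh (dist z m1) = Real.cosh (dist m1 z) from by rw [dist_comm],
    show Real.cosh (dist z x) = Real.cosh (dist x z) from by rw [dist_comm],
    show Real.cosh (dist z y) = Real.cosh (dist y z) from by rw [dist_comm]] at B
  have hKI := key_ineq (dist_nonneg : (0:ℝ) ≤ dist y z) (dist_nonneg : (0:ℝ) ≤ dist x y)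
    (dist_nonneg : (0:ℝ) ≤ dist x z)
    (by have := dist_triangle y x z; rw [dist_comm y x] at this; linarith)
    (by have := abs_dist_sub_le y z x
        rw [dist_comm y x, dist_comm z x] at this
        exact this)
  have hcq : 0 < Real.cosh (dist x z / 2) := Real.cosh_pos _
  have hcc : 0 < Real.cosh (dist x y / 2) := Real.cosh_pos _
  have e3 := cosh_half_sq (dist x y)
  have A2 : Real.cosh (dist m1 m2) * (4 * Real.cosh (dist x z / 2) * Real.cosh (dist x y / 2))
      = 2 * Real.cosh (dist x y / 2) ^ 2 + Real.cosh (dist x z) + Real.cosh (dist y z) := by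
    linear_combination (2 * Real.cosh (dist x y / 2)) * A + B
  have key : Real.cosh (dist m1 m2) * (4 * Real.cosh (dist x z / 2) * Real.cosh (dist x y / 2))
      ≤ Real.cosh (dist y z / 2) * (4 * Real.cosh (dist x z / 2) * Real.cosh (dist x y / 2)) := by
    nlinarith [A2, e3, hKI]
  have hpos : 0 < 4 * Real.cosh (dist x z / 2) * Real.cosh (dist x y / 2) := by positivity
  have hle : Real.cosh (dist m1 m2) ≤ Real.cosh (dist y z / 2) :=
    le_of_mul_le_mul_right (by linarith [key]) hpos
  have h := Real.cosh_le_cosh.mp hle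
  rw [abs_of_nonneg dist_nonneg, abs_of_nonneg (by positivity : (0:ℝ) ≤ dist y z / 2)] at h
  exact h
lemma h_midpt (f g : ℝ → UpperHalfPlane) (a b : ℝ)
    (hf : ∀ s ∈ Set.Icc (0 : ℝ) 1, ∀ t ∈ Set.Icc (0 : ℝ) 1,
      dist (f s) (f t) = a * |s - t|)
    (hg : ∀ s ∈ Set.Icc (0 : ℝ) 1, ∀ t ∈ Set.Icc (0 : ℝ) 1,
      dist (g s) (g t) = b * |s - t|)
    {s t : ℝ} (hs : s ∈ Set.Icc (0:ℝ) 1) (ht : t ∈ Set.Icc (0:ℝ) 1) :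
    dist (f ((s+t)/2)) (g ((s+t)/2))
      ≤ (dist (f s) (g s) + dist (f t) (g t)) / 2 := by
  obtain ⟨hs0, hs1⟩ := hs
  obtain ⟨ht0, ht1⟩ := ht
  have hu : (s+t)/2 ∈ Set.Icc (0:ℝ) 1 := ⟨by linarith, by linarith⟩
  set u := (s+t)/2 with hudef
  have habs1 : |s - u| = |s - t| / 2 := by
    rw [show s - u = (s - t)/2 by rw [hudef]; ring, abs_div]; norm_num
  have habs2 : |u - t| = |s - t| / 2 := by
    rw [show u - t = (s - t)/2 by rw [hudef]; ring, abs_div]; norm_num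
  have habs3 : |t - u| = |t - s| / 2 := by
    rw [show t - u = (t - s)/2 by rw [hudef]; ring, abs_div]; norm_num
  have habs4 : |u - s| = |t - s| / 2 := by
    rw [show u - s = (t - s)/2 by rw [hudef]; ring, abs_div]; norm_num
  have hfu1 : dist (f s) (f u) = dist (f s) (f t) / 2 := by
    rw [hf s ⟨hs0, hs1⟩ u hu, hf s ⟨hs0, hs1⟩ t ⟨ht0, ht1⟩, habs1]; ring
  have hfu2 : dist (f u) (f t) = dist (f s) (f t) / 2 := by
    rw [hf u hu t ⟨ht0, ht1⟩, hf s ⟨hs0, hs1⟩ t ⟨ht0, ht1⟩, habs2]; ring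
  have hgu1 : dist (g t) (g u) = dist (g t) (g s) / 2 := by
    rw [hg t ⟨ht0, ht1⟩ u hu, hg t ⟨ht0, ht1⟩ s ⟨hs0, hs1⟩, habs3]; ring
  have hgu2 : dist (g u) (g s) = dist (g t) (g s) / 2 := by
    rw [hg u hu s ⟨hs0, hs1⟩, hg t ⟨ht0, ht1⟩ s ⟨hs0, hs1⟩, habs4]; ring
  obtain ⟨z, hz1, hz2⟩ := midpoint_exists (f s) (g t)
  have L1 : dist (f u) z ≤ dist (f t) (g t) / 2 :=
    dist_mid_le (f s) (f t) (g t) (f u) z hfu1 hfu2 hz1 hz2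
  have hz1' : dist (g t) z = dist (g t) (f s) / 2 := by
    rw [dist_comm (g t) z, dist_comm (g t) (f s)]; exact hz2
  have hz2' : dist z (f s) = dist (g t) (f s) / 2 := by
    rw [dist_comm z (f s), dist_comm (g t) (f s)]; exact hz1
  have L2 : dist (g u) z ≤ dist (g s) (f s) / 2 :=
    dist_mid_le (g t) (g s) (f s) (g u) z hgu1 hgu2 hz1' hz2'
  have htri : dist (f u) (g u) ≤ dist (f u) z + dist z (g u) := dist_triangle _ _ _
  rw [dist_comm z (g u)] at htri
  rw [dist_comm (g s) (f s)] at L2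
  linarith

lemma max_principle (φ : ℝ → ℝ) (hφcont : ContinuousOn φ (Set.Icc (0:ℝ) 1))
    (hφmid : ∀ s ∈ Set.Icc (0:ℝ) 1, ∀ t ∈ Set.Icc (0:ℝ) 1,
      φ ((s+t)/2) ≤ (φ s + φ t) / 2)
    (h0 : φ 0 ≤ 0) (h1 : φ 1 ≤ 0) :
    ∀ μ ∈ Set.Icc (0:ℝ) 1, φ μ ≤ 0 := by
  obtain ⟨c, hc, hmax'⟩ :=
    isCompact_Icc.exists_isMaxOn (Set.nonempty_Icc.mpr zero_le_one) hφcont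
  have hmax : ∀ y ∈ Set.Icc (0:ℝ) 1, φ y ≤ φ c := fun y hy => hmax' hy
  by_contra hcon
  push_neg at hcon
  obtain ⟨μ0, hμ0, hμ0pos⟩ := hcon
  have hM : 0 < φ c := lt_of_lt_of_le hμ0pos (hmax μ0 hμ0)
  set S : Set ℝ := {t ∈ Set.Icc (0:ℝ) 1 | φ c ≤ φ t} with hS
  have hSclosed : IsClosed S :=
    hφcont.preimage_isClosed_of_isClosed isClosed_Icc isClosed_Ici
  have hSne : S.Nonempty := ⟨c, hc, le_refl _⟩
  have hSbdd : BddBelow S := bddBelow_Icc.mono (fun x hx => hx.1)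
  set c0 := sInf S with hc0
  have hc0S : c0 ∈ S := hSclosed.csInf_mem hSne hSbdd
  obtain ⟨hc0I, hc0M⟩ := hc0S
  have hc0M' : φ c0 = φ c := le_antisymm (hmax c0 hc0I) hc0M
  have hc0ne0 : c0 ≠ 0 := by intro h; rw [h] at hc0M'; linarith
  have hc0ne1 : c0 ≠ 1 := by intro h; rw [h] at hc0M'; linarith
  have h0lt : 0 < c0 := lt_of_le_of_ne hc0I.1 (Ne.symm hc0ne0)
  have hlt1 : c0 < 1 := lt_of_le_of_ne hc0I.2 hc0ne1
  set ε := min c0 (1 - c0) with hε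
  have hεpos : 0 < ε := lt_min h0lt (by linarith)
  have hεle1 : ε ≤ c0 := min_le_left _ _
  have hεle2 : ε ≤ 1 - c0 := min_le_right _ _
  have hsI : c0 - ε ∈ Set.Icc (0:ℝ) 1 := ⟨by linarith, by linarith⟩
  have htI : c0 + ε ∈ Set.Icc (0:ℝ) 1 := ⟨by linarith, by linarith⟩
  have hmid := hφmid _ hsI _ htI
  rw [show ((c0 - ε) + (c0 + ε))/2 = c0 from by ring] at hmid
  have hφt : φ (c0 + ε) ≤ φ c := hmax _ htI
  have hφs : φ c ≤ φ (c0 - ε) := by linarith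
  have hcs : c0 ≤ c0 - ε := csInf_le hSbdd ⟨hsI, hφs⟩
  linarith

lemma key_lemma (f g : ℝ → UpperHalfPlane) (a b : ℝ) (ha : 0 ≤ a) (hb : 0 ≤ b)
    (hf : ∀ s ∈ Set.Icc (0 : ℝ) 1, ∀ t ∈ Set.Icc (0 : ℝ) 1,
      dist (f s) (f t) = a * |s - t|)
    (hg : ∀ s ∈ Set.Icc (0 : ℝ) 1, ∀ t ∈ Set.Icc (0 : ℝ) 1,
      dist (g s) (g t) = b * |s - t|) :
    ∀ lam ∈ Set.Icc (0 : ℝ) 1,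
      dist (f lam) (g lam) ≤
        (1 - lam) * dist (f 0) (g 0) + lam * dist (f 1) (g 1) := by
  have hcont : ContinuousOn (fun t => dist (f t) (g t)) (Set.Icc (0:ℝ) 1) := by
    have hlip : LipschitzOnWith (Real.toNNReal (a + b))
        (fun t => dist (f t) (g t)) (Set.Icc (0:ℝ) 1) := by
      apply LipschitzOnWith.of_dist_le_mul
      intro s hs t ht
      have h1 := dist_dist_dist_le (f s) (g s) (f t) (g t)
      rw [hf s hs t ht, hg s hs t ht] at h1
      calc dist (dist (f s) (g s)) (dist (f t) (g t)) ≤ a * |s - t| + b * |s - t| := h1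
        _ = (a + b) * |s - t| := by ring
        _ = (Real.toNNReal (a + b) : ℝ) * dist s t := by
            rw [Real.coe_toNNReal _ (by linarith), Real.dist_eq]
    exact hlip.continuousOn
  have haff : Continuous fun t : ℝ =>
      (1 - t) * dist (f 0) (g 0) + t * dist (f 1) (g 1) := by fun_prop
  have main := max_principle
    (fun t => dist (f t) (g t) - ((1 - t) * dist (f 0) (g 0) + t * dist (f 1) (g 1)))
    (hcont.sub haff.continuousOn)
    (by
      intro s hs t ht
      have hmain := h_midpt f g a b hf hg hs ht
      linarith)
    (by simp) (by simp)
  intro lam hlam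
  have hm := main lam hlam
  linarith

end HypAux
end


/-- Convexity of the hyperbolic distance along constant-speed geodesic segments:
if `f` and `g` are constant-speed geodesic segments in the hyperbolic plane
(the upper half-plane with its hyperbolic metric), then for every `lam ∈ [0,1]`,
`dist (f lam) (g lam) ≤ (1 − lam) * dist (f 0) (g 0) + lam * dist (f 1) (g 1)`;
that is, the function `t ↦ dist (f t) (g t)` is convex on `[0, 1]`. -/
theorem dist_convex_of_geodesics (f g : ℝ → UpperHalfPlane) (a b : ℝ)
    (ha : 0 ≤ a) (hb : 0 ≤ b)
    (hf : ∀ s ∈ Set.Icc (0 : ℝ) 1, ∀ t ∈ Set.Icc (0 : ℝ) 1,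
      dist (f s) (f t) = a * |s - t|)
    (hg : ∀ s ∈ Set.Icc (0 : ℝ) 1, ∀ t ∈ Set.Icc (0 : ℝ) 1,
      dist (g s) (g t) = b * |s - t|) :
    (∀ lam ∈ Set.Icc (0 : ℝ) 1,
      dist (f lam) (g lam) ≤
        (1 - lam) * dist (f 0) (g 0) + lam * dist (f 1) (g 1)) ∧
      ConvexOn ℝ (Set.Icc (0 : ℝ) 1) (fun t => dist (f t) (g t)) := by
  
  refine ⟨HypAux.key_lemma f g a b ha hb hf hg, convex_Icc 0 1, ?_⟩
  intro x hx y hy p q hp hq hpq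
  simp only [smul_eq_mul]
  have hmem : ∀ u ∈ Set.Icc (0:ℝ) 1, x + u * (y - x) ∈ Set.Icc (0:ℝ) 1 := by
    intro u hu
    obtain ⟨hx0, hx1⟩ := hx; obtain ⟨hy0, hy1⟩ := hy; obtain ⟨hu0, hu1⟩ := hu
    constructor
    · nlinarith
    · nlinarith
  have hF' : ∀ s ∈ Set.Icc (0:ℝ) 1, ∀ t ∈ Set.Icc (0:ℝ) 1,
      dist (f (x + s * (y - x))) (f (x + t * (y - x))) = (a * |y - x|) * |s - t| := by
    intro s hs t ht
    rw [hf _ (hmem s hs) _ (hmem t ht),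
      show x + s*(y-x) - (x + t*(y-x)) = (s-t)*(y-x) by ring, abs_mul]
    ring
  have hG' : ∀ s ∈ Set.Icc (0:ℝ) 1, ∀ t ∈ Set.Icc (0:ℝ) 1,
      dist (g (x + s * (y - x))) (g (x + t * (y - x))) = (b * |y - x|) * |s - t| := by
    intro s hs t ht
    rw [hg _ (hmem s hs) _ (hmem t ht),
      show x + s*(y-x) - (x + t*(y-x)) = (s-t)*(y-x) by ring, abs_mul]
    ring
  have hkey := HypAux.key_lemma (fun u => f (x + u * (y - x))) (fun u => g (x + u * (y - x)))
    (a * |y - x|) (b * |y - x|) (by positivity) (by positivity) hF' hG'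
    q ⟨hq, by linarith⟩
  have e0 : x + (0:ℝ) * (y - x) = x := by ring
  have e1 : x + (1:ℝ) * (y - x) = y := by ring
  have eq2 : x + q * (y - x) = p * x + q * y := by
    have hp1 : p = 1 - q := by linarith
    rw [hp1]; ring
  simp only [e0, e1, eq2] at hkey
  have hp1 : 1 - q = p := by linarith
  rw [hp1] at hkey
  exact hkey
end
end

section
/- Let f, g : ℝ → ℍ be constant-speed geodesic segments in the hyperbolic plane, i.e. there are real constants a, b ≥ 0 such that dist(f s, f t) = a·|s − t| and dist(g s, g t) = b·|s − t| for all s, t ∈ [0,1]. If for some λ ∈ (0,1) equality dist(f λ, g λ) = (1 − λ)·dist(f 0, g 0) + λ·dist(f 1, g 1) holds, then the four points f 0, f 1, g 0, g 1 lie on a common geodesic line: there exists an isometric embedding γ : ℝ → ℍ (a map satisfying Isometry γ) whose range contains f 0, f 1, g 0 and g 1. -/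
open UpperHalfPlane

open Real Set
open scoped MatrixGroups

noncomputable section

namespace ColHyp


lemma cosh_log_sub {A B : ℝ} (hA : 0 < A) (hB : 0 < B) :
    Real.cosh (Real.log A - Real.log B) = (A^2+B^2)/(2*A*B) := by
  rw [← Real.log_div hA.ne' hB.ne', Real.cosh_log (div_pos hA hB)]
  field_simp

lemma sinh_log_sub {A B : ℝ} (hA : 0 < A) (hB : 0 < B) :
    Real.sinh (Real.log A - Real.log B) = (A^2-B^2)/(2*A*B) := by
  rw [← Real.log_div hA.ne' hB.ne', Real.sinh_log (div_pos hA hB)]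
  field_simp

lemma re_eq_of_dist_eq_log (z w : ℍ) (h : dist z w = dist (Real.log z.im) (Real.log w.im)) :
    z.re = w.re := by
  have h1 := cosh_dist' z w
  rw [h, Real.dist_eq, Real.cosh_abs, cosh_log_sub z.im_pos w.im_pos] at h1
  have h2 : (0:ℝ) < 2 * z.im * w.im := by positivity
  have h3 : (z.re - w.re)^2 = 0 := by
    field_simp at h1; nlinarith [h1]
  have h4 := pow_eq_zero_iff (two_ne_zero) |>.1 h3
  linarith [h4]

/-- between-case pinning -/
lemma pin_btw {x y p : ℍ} (hxy : x.re = y.re) (h : dist x p + dist p y = dist x y) :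
    p.re = x.re ∧ dist x p = dist (Real.log x.im) (Real.log p.im)
      ∧ dist p y = dist (Real.log p.im) (Real.log y.im) := by
  have e : dist x y = dist (Real.log x.im) (Real.log y.im) := dist_of_re_eq hxy
  have h1 := dist_log_im_le x p
  have h2 := dist_log_im_le p y
  have h3 := dist_triangle (Real.log x.im) (Real.log p.im) (Real.log y.im)
  have e1 : dist x p = dist (Real.log x.im) (Real.log p.im) := by linarith
  have e2 : dist p y = dist (Real.log p.im) (Real.log y.im) := by linarith
  exact ⟨(re_eq_of_dist_eq_log x p e1).symm, e1, e2⟩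

lemma pin_alg {R u v m e C S : ℝ} (hu : 0 < u) (hv : 0 < v) (hm : 0 < m)
    (he : e^2 = 1) (hcs : C^2 - S^2 = 1) (huv : u ≠ v)
    (P1 : R + v^2 + m^2 = 2*v*m*C)
    (P2 : v*(R + u^2 + m^2) = m*((u^2+v^2)*C + e*(u^2-v^2)*S)) :
    R = 0 := by
  have hzz : u^2 - v^2 ≠ 0 := by
    intro hh
    apply huv
    nlinarith [hh]
  have key : (v - m*(C+e*S))*(u^2-v^2) = 0 := by linear_combination P2 - v*P1
  have hv2 : v = m*(C+e*S) := by
    rcases mul_eq_zero.1 key with hk | hk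
    · linarith [sub_eq_zero.1 hk]
    · exact absurd hk hzz
  linear_combination P1 - (v + m*(C+e*S) - 2*m*C)*hv2 + m^2*hcs - m^2*S^2*he

/-- extension-case pinning: `y` between `x` and `p`. -/
lemma pin_ext {x y p : ℍ} (hxy : x.re = y.re) (hne : x ≠ y)
    (h : dist x p = dist x y + dist y p) : p.re = x.re := by
  have hu : 0 < x.im := x.im_pos
  have hv : 0 < y.im := y.im_pos
  have hm : 0 < p.im := p.im_pos
  have huv : x.im ≠ y.im := fun hh => hne (UpperHalfPlane.ext' hxy hh)
  have hcs : Real.cosh (dist y p)^2 - Real.sinh (dist y p)^2 = 1 :=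
    Real.cosh_sq_sub_sinh_sq _
  have hP1 : Real.cosh (dist y p) * (2*y.im*p.im)
      = ((y.re - p.re)^2 + y.im^2 + p.im^2) := by
    rw [cosh_dist']; field_simp
  have P1 : (x.re - p.re)^2 + y.im^2 + p.im^2 = 2*y.im*p.im*Real.cosh (dist y p) := by
    rw [hxy]; linarith [hP1]
  have hP2 : Real.cosh (dist x p) * (2*x.im*p.im)
      = ((x.re - p.re)^2 + x.im^2 + p.im^2) := by
    rw [cosh_dist']; field_simp
  have hdxy : dist x y = |Real.log x.im - Real.log y.im| := by
    rw [dist_of_re_eq hxy, Real.dist_eq]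
  rcases le_or_gt y.im x.im with hle | hlt
  · have habs : |Real.log x.im - Real.log y.im| = Real.log x.im - Real.log y.im :=
      abs_of_nonneg (sub_nonneg.2 (Real.log_le_log hv hle))
    have hco : Real.cosh (dist x p) * (2*x.im*y.im)
        = (x.im^2+y.im^2)*Real.cosh (dist y p)
          + (1:ℝ)*(x.im^2-y.im^2)*Real.sinh (dist y p) := by
      rw [h, hdxy, habs, Real.cosh_add, cosh_log_sub hu hv, sinh_log_sub hu hv]
      first | (field_simp; ring) | field_simp
    have P2 : y.im*((x.re - p.re)^2 + x.im^2 + p.im^2)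
        = p.im*((x.im^2+y.im^2)*Real.cosh (dist y p)
            + (1:ℝ)*(x.im^2-y.im^2)*Real.sinh (dist y p)) := by
      linear_combination p.im*hco - y.im*hP2
    have hR := pin_alg hu hv hm (by norm_num) hcs huv P1 P2
    have h4 := pow_eq_zero_iff (two_ne_zero) |>.1 hR
    linarith [h4]
  · have habs : |Real.log x.im - Real.log y.im| = Real.log y.im - Real.log x.im := by
      rw [abs_of_nonpos (sub_nonpos.2 (Real.log_le_log hu hlt.le))]; ring
    have hco : Real.cosh (dist x p) * (2*x.im*y.im)
        = (x.im^2+y.im^2)*Real.cosh (dist y p)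
          + (-1:ℝ)*(x.im^2-y.im^2)*Real.sinh (dist y p) := by
      rw [h, hdxy, habs, Real.cosh_add, cosh_log_sub hv hu, sinh_log_sub hv hu]
      first | (field_simp; ring) | field_simp
    have P2 : y.im*((x.re - p.re)^2 + x.im^2 + p.im^2)
        = p.im*((x.im^2+y.im^2)*Real.cosh (dist y p)
            + (-1:ℝ)*(x.im^2-y.im^2)*Real.sinh (dist y p)) := by
      linear_combination p.im*hco - y.im*hP2
    have hR := pin_alg hu hv hm (by norm_num) hcs huv P1 P2
    have h4 := pow_eq_zero_iff (two_ne_zero) |>.1 hR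
    linarith [h4]



lemma re_smul_eq (g : SL(2,ℝ)) (z : ℍ) :
    (g • z).re = ((g 0 0 * z + g 0 1)/(g 1 0 * z + g 1 1) : ℂ).re := by
  rw [UpperHalfPlane.specialLinearGroup_apply]
  simp [UpperHalfPlane.mk_re]

lemma re_smul_zero (g : SL(2,ℝ)) (z : ℍ)
    (h : (g 0 0 * z.re + g 0 1) * (g 1 0 * z.re + g 1 1) + (g 0 0 * z.im) * (g 1 0 * z.im) = 0) :
    (g • z).re = 0 := by
  rw [re_smul_eq, Complex.div_re]
  have h1 : (g 0 0 * (z:ℂ) + g 0 1).re = g 0 0 * z.re + g 0 1 := by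
    simp [Complex.add_re, Complex.mul_re, UpperHalfPlane.coe_re, UpperHalfPlane.coe_im]
  have h2 : (g 0 0 * (z:ℂ) + g 0 1).im = g 0 0 * z.im := by
    simp [Complex.add_im, Complex.mul_im, UpperHalfPlane.coe_re, UpperHalfPlane.coe_im]
  have h3 : (g 1 0 * (z:ℂ) + g 1 1).re = g 1 0 * z.re + g 1 1 := by
    simp [Complex.add_re, Complex.mul_re, UpperHalfPlane.coe_re, UpperHalfPlane.coe_im]
  have h4 : (g 1 0 * (z:ℂ) + g 1 1).im = g 1 0 * z.im := by
    simp [Complex.add_im, Complex.mul_im, UpperHalfPlane.coe_re, UpperHalfPlane.coe_im]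
  rw [h1, h2, h3, h4, ← add_div, h, zero_div]

lemma exists_normalize (z w : ℍ) :
    ∃ M : SL(2,ℝ), (M • z).re = 0 ∧ (M • w).re = 0 := by
  rcases eq_or_ne z.re w.re with hre | hre
  · refine ⟨⟨!![1, -z.re; 0, 1], by simp [Matrix.det_fin_two_of]⟩, ?_, ?_⟩
    · apply re_smul_zero
      simp [Matrix.SpecialLinearGroup.coe_mk]
    · apply re_smul_zero
      simp [Matrix.SpecialLinearGroup.coe_mk, ← hre]
  · set c : ℝ := (z.re^2 + z.im^2 - w.re^2 - w.im^2)/(2*(z.re - w.re)) with hc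
    set r : ℝ := Real.sqrt ((z.re - c)^2 + z.im^2) with hrdef
    have hrpos : 0 < r := by
      apply Real.sqrt_pos.2
      have := z.im_pos
      positivity
    have hr2 : r^2 = (z.re - c)^2 + z.im^2 := by
      rw [hrdef]; exact Real.sq_sqrt (by positivity)
    have hw2 : (w.re - c)^2 + w.im^2 = r^2 := by
      rw [hr2, hc]
      have hd : z.re - w.re ≠ 0 := sub_ne_zero.2 hre
      field_simp
      ring
    set s : ℝ := (Real.sqrt (2*r))⁻¹ with hs
    have hsr : 0 < Real.sqrt (2*r) := Real.sqrt_pos.2 (by linarith)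
    have hs2 : s^2 * (2*r) = 1 := by
      rw [hs, ← Real.sq_sqrt (by linarith : (0:ℝ) ≤ 2*r)]
      field_simp
      rw [Real.sqrt_sq hsr.le]
    refine ⟨⟨!![s, -(c-r)*s; -s, (c+r)*s], ?_⟩, ?_, ?_⟩
    · simp [Matrix.det_fin_two_of]
      nlinarith [hs2]
    · apply re_smul_zero
      simp only [Matrix.SpecialLinearGroup.coe_mk, Matrix.cons_val_zero, Matrix.cons_val_one,
        Matrix.head_cons, Matrix.head_fin_const, Matrix.cons_val_fin_one, Matrix.cons_val',
        Matrix.empty_val', Matrix.of_apply]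
      nlinarith [hr2]
    · apply re_smul_zero
      simp only [Matrix.SpecialLinearGroup.coe_mk, Matrix.cons_val_zero, Matrix.cons_val_one,
        Matrix.head_cons, Matrix.head_fin_const, Matrix.cons_val_fin_one, Matrix.cons_val',
        Matrix.empty_val', Matrix.of_apply]
      nlinarith [hw2]

lemma exists_line_of_normalized (M : SL(2,ℝ)) :
    ∃ γ : ℝ → ℍ, Isometry γ ∧ ∀ z : ℍ, (M • z).re = 0 → z ∈ Set.range γ := by
  refine ⟨fun t => M⁻¹ • mk ⟨0, Real.exp t⟩ (Real.exp_pos t),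
    (isometry_smul ℍ M⁻¹).comp (isometry_vertical_line 0), fun z hz => ?_⟩
  refine ⟨Real.log (M • z).im, ?_⟩
  have h1 : mk ⟨0, Real.exp (Real.log (M • z).im)⟩ (Real.exp_pos _) = M • z := by
    apply UpperHalfPlane.ext'
    · simp [UpperHalfPlane.mk_re, hz.symm, Complex.ofReal_re]
    · simp [UpperHalfPlane.mk_im, Real.exp_log (M • z).im_pos]
  simp only [h1, inv_smul_smul]

lemma dist_of_normalized (M : SL(2,ℝ)) (z w : ℍ) (hz : (M • z).re = 0) (hw : (M • w).re = 0) :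
    dist z w = dist (Real.log (M • z).im) (Real.log (M • w).im) := by
  rw [← dist_smul M z w]
  exact dist_of_re_eq (hz.trans hw.symm)

lemma exists_midpoint (x y : ℍ) :
    ∃ m : ℍ, dist x m = dist x y / 2 ∧ dist m y = dist x y / 2 := by
  obtain ⟨M, hz, hw⟩ := exists_normalize x y
  set u := Real.log (M • x).im with hu
  set v := Real.log (M • y).im with hv
  refine ⟨M⁻¹ • mk ⟨0, Real.exp ((u+v)/2)⟩ (Real.exp_pos _), ?_, ?_⟩
  · have h1 : dist x (M⁻¹ • mk ⟨0, Real.exp ((u+v)/2)⟩ (Real.exp_pos _))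
        = dist (M • x) (mk ⟨0, Real.exp ((u+v)/2)⟩ (Real.exp_pos _)) := by
      rw [← dist_smul M, smul_inv_smul]
    rw [h1, dist_of_re_eq (by simp [hz, UpperHalfPlane.mk_re])]
    rw [dist_of_normalized M x y hz hw]
    simp only [UpperHalfPlane.mk_im]
    rw [Real.log_exp, ← hu, ← hv, Real.dist_eq, Real.dist_eq]
    rw [abs_sub_comm u ((u+v)/2)]
    rw [show (u+v)/2 - u = (v-u)/2 by ring, abs_div, abs_sub_comm v u]
    simp
  · have h1 : dist (M⁻¹ • mk ⟨0, Real.exp ((u+v)/2)⟩ (Real.exp_pos _)) y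
        = dist (mk ⟨0, Real.exp ((u+v)/2)⟩ (Real.exp_pos _)) (M • y) := by
      rw [← dist_smul M, smul_inv_smul]
    rw [h1, dist_of_re_eq (by simp [hw, UpperHalfPlane.mk_re])]
    rw [dist_of_normalized M x y hz hw]
    simp only [UpperHalfPlane.mk_im]
    rw [Real.log_exp, ← hu, ← hv, Real.dist_eq, Real.dist_eq]
    rw [show (u+v)/2 - v = (u-v)/2 by ring, abs_div]
    simp




lemma mid_log {a b w : ℝ} (h1 : |a - w| = |a - b|/2) (h2 : |w - b| = |a-b|/2) :
    w = (a+b)/2 := by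
  have e1 : (a-w)^2 = (a-b)^2/4 := by
    rw [← sq_abs (a-w), h1, ← sq_abs (a-b)]; ring
  have e2 : (w-b)^2 = (a-b)^2/4 := by
    rw [← sq_abs (w-b), h2, ← sq_abs (a-b)]; ring
  have e3 : (a + b - 2*w)^2 = 0 := by nlinarith [e1, e2]
  have e4 := pow_eq_zero_iff (two_ne_zero) |>.1 e3
  linarith

lemma median_normalized (x y z m : ℍ) (hy : y.re = 0) (hz : z.re = 0)
    (h1 : dist y m = dist y z / 2) (h2 : dist m z = dist y z / 2) :
    Real.cosh (dist x y) + Real.cosh (dist x z)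
      = 2 * Real.cosh (dist y z / 2) * Real.cosh (dist x m) := by
  have hbtw : dist y m + dist m z = dist y z := by rw [h1, h2]; ring
  obtain ⟨hmre, hym, hmz⟩ := pin_btw (hy.trans hz.symm) hbtw
  have hdyz : dist y z = dist (Real.log y.im) (Real.log z.im) :=
    dist_of_re_eq (hy.trans hz.symm)
  -- log of midpoint im
  have hmlog : Real.log m.im = (Real.log y.im + Real.log z.im)/2 := by
    apply mid_log (a := Real.log y.im) (b := Real.log z.im)
    · rw [← Real.dist_eq, ← hym, h1, hdyz, Real.dist_eq]
    · rw [← Real.dist_eq, ← hmz, h2, hdyz, Real.dist_eq]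
  have hmu : m.im^2 = y.im * z.im := by
    have h5 : m.im = Real.exp ((Real.log y.im + Real.log z.im)/2) := by
      rw [← hmlog, Real.exp_log m.im_pos]
    rw [h5, sq, ← Real.exp_add]
    rw [show (Real.log y.im + Real.log z.im)/2 + (Real.log y.im + Real.log z.im)/2
        = Real.log y.im + Real.log z.im by ring]
    rw [Real.exp_add, Real.exp_log y.im_pos, Real.exp_log z.im_pos]
  -- cosh (dist y z / 2)
  have hc2 : Real.cosh (dist y z / 2) = (y.im^2 + m.im^2)/(2*y.im*m.im) := by
    rw [← h1, hym, Real.dist_eq, Real.cosh_abs, cosh_log_sub y.im_pos m.im_pos]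
  have hz_im : z.im = m.im^2 / y.im := by
    field_simp [y.im_pos.ne'] at hmu ⊢
    linarith [hmu]
  rw [cosh_dist' x y, cosh_dist' x z, cosh_dist' x m, hc2, hmre, hy, hz]
  rw [hz_im]
  have h6 : m.im ≠ 0 := m.im_pos.ne'
  have h7 : y.im ≠ 0 := y.im_pos.ne'
  have h8 : x.im ≠ 0 := x.im_pos.ne'
  field_simp
  ring

lemma median (x y z m : ℍ)
    (h1 : dist y m = dist y z / 2) (h2 : dist m z = dist y z / 2) :
    Real.cosh (dist x y) + Real.cosh (dist x z)
      = 2 * Real.cosh (dist y z / 2) * Real.cosh (dist x m) := by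
  obtain ⟨M, hy, hz⟩ := exists_normalize y z
  have h1' : dist (M • y) (M • m) = dist (M • y) (M • z) / 2 := by
    rw [dist_smul, dist_smul]; exact h1
  have h2' : dist (M • m) (M • z) = dist (M • y) (M • z) / 2 := by
    rw [dist_smul, dist_smul]; exact h2
  have := median_normalized (M • x) (M • y) (M • z) (M • m) hy hz h1' h2'
  rwa [dist_smul, dist_smul, dist_smul, dist_smul] at this

lemma midline_core {A B C D : ℝ} (hA : 0 ≤ A) (hB : 0 ≤ B) (hC : 0 ≤ C) (hD : 0 ≤ D)
    (t1 : A ≤ B + C) (t2 : B ≤ A + C) (t3 : C ≤ A + B)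
    (hid : 2*Real.cosh A^2 + Real.cosh (2*B) + Real.cosh (2*C)
      = 4*Real.cosh A*Real.cosh B*Real.cosh D) :
    D ≤ C ∧ (D = C → A = B + C ∨ B = A + C ∨ C = A + B) := by
  have iden : 4*Real.cosh A*Real.cosh B*Real.cosh C
      - (2*Real.cosh A^2 + Real.cosh (2*B) + Real.cosh (2*C))
      = 2*(Real.cosh (B+C) - Real.cosh A)*(Real.cosh A - Real.cosh (B-C)) := by
    rw [Real.cosh_add, Real.cosh_sub, Real.cosh_two_mul, Real.cosh_two_mul]
    linear_combination (-1 - 2*Real.sinh C^2)*(Real.sinh_sq B) + (1 - 2*Real.cosh B^2)*(Real.sinh_sq C)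
  have fact1 : Real.cosh A ≤ Real.cosh (B+C) := by
    rw [Real.cosh_le_cosh, abs_of_nonneg hA, abs_of_nonneg (by linarith : (0:ℝ) ≤ B + C)]
    exact t1
  have fact2 : Real.cosh (B-C) ≤ Real.cosh A := by
    rw [Real.cosh_le_cosh, abs_of_nonneg hA]
    rw [abs_le]
    constructor <;> linarith
  have prod : 0 ≤ (Real.cosh (B+C) - Real.cosh A)*(Real.cosh A - Real.cosh (B-C)) := by
    apply mul_nonneg <;> linarith
  have hAp : 0 < Real.cosh A := Real.cosh_pos _
  have hBp : 0 < Real.cosh B := Real.cosh_pos _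
  have e5 : 4*Real.cosh A*Real.cosh B*Real.cosh C - 4*Real.cosh A*Real.cosh B*Real.cosh D
      = 2*((Real.cosh (B+C) - Real.cosh A)*(Real.cosh A - Real.cosh (B-C))) := by
    linarith [iden, hid]
  have hDC : Real.cosh D ≤ Real.cosh C := by
    nlinarith [e5, prod, mul_pos hAp hBp]
  constructor
  · have := Real.cosh_le_cosh.1 hDC
    rwa [abs_of_nonneg hD, abs_of_nonneg hC] at this
  · intro hDCeq
    rw [hDCeq] at hid
    have hzero : (Real.cosh (B+C) - Real.cosh A)*(Real.cosh A - Real.cosh (B-C)) = 0 := by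
      linarith [iden, hid]
    rcases mul_eq_zero.1 hzero with hf | hf
    · left
      have h9 : Real.cosh (B+C) ≤ Real.cosh A := by linarith
      have h10 := Real.cosh_le_cosh.1 h9
      rw [abs_of_nonneg hA, abs_of_nonneg (by linarith : (0:ℝ) ≤ B + C)] at h10
      linarith
    · right
      have h9 : Real.cosh A ≤ Real.cosh (B-C) := by linarith
      have h10 := Real.cosh_le_cosh.1 h9
      rw [abs_of_nonneg hA] at h10
      rcases abs_cases (B - C) with ⟨he, _⟩ | ⟨he, _⟩
      · left; rw [he] at h10; linarith
      · right; rw [he] at h10; linarith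

lemma midline (x y z m1 m2 : ℍ)
    (h1 : dist x m1 = dist x y / 2) (h1' : dist m1 y = dist x y / 2)
    (h2 : dist x m2 = dist x z / 2) (h2' : dist m2 z = dist x z / 2) :
    dist m1 m2 ≤ dist y z / 2 ∧
      (dist m1 m2 = dist y z / 2 →
        dist x y = dist x z + dist z y ∨ dist x z = dist x y + dist y z
          ∨ dist y z = dist y x + dist x z) := by
  have med1 := median m1 x z m2 h2 h2'
  have med2 := median z x y m1 h1 h1'
  have hm1x : dist m1 x = dist x y / 2 := by rw [dist_comm]; exact h1
  have hAp : 0 < Real.cosh (dist x y / 2) := Real.cosh_pos _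
  -- derive hid
  have hid : 2*Real.cosh (dist x y / 2)^2 + Real.cosh (2*(dist x z / 2))
      + Real.cosh (2*(dist y z / 2))
      = 4*Real.cosh (dist x y / 2)*Real.cosh (dist x z / 2)*Real.cosh (dist m1 m2) := by
    have e1 : Real.cosh (dist m1 z) * (2 * Real.cosh (dist x y / 2))
        = Real.cosh (2*(dist x z / 2)) + Real.cosh (2*(dist y z / 2)) := by
      rw [show 2*(dist x z / 2) = dist x z by ring, show 2*(dist y z / 2) = dist y z by ring]
      rw [dist_comm x z, dist_comm y z, ← dist_comm z m1]
      linarith [med2]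
    have e2 := med1
    rw [hm1x] at e2
    nlinarith [e1, e2]
  have tri1 := dist_triangle x z y
  have tri2 := dist_triangle x y z
  have tri3 := dist_triangle y x z
  have core := midline_core (by positivity) (by positivity) (by positivity) dist_nonneg
    (by rw [dist_comm z y] at tri1; linarith)
    (by linarith) (by rw [dist_comm y x] at tri3; linarith) hid
  constructor
  · exact core.1
  · intro heq
    rcases core.2 heq with hcase | hcase | hcase
    · left; rw [dist_comm z y]; linarith
    · right; left; linarith
    · right; right; rw [dist_comm y x]; linarith




lemma nonpos_of_midconv (ψ : ℝ → ℝ) (hcont : ContinuousOn ψ (Icc 0 1))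
    (hmid : ∀ s ∈ Icc (0:ℝ) 1, ∀ t ∈ Icc (0:ℝ) 1, ψ ((s+t)/2) ≤ (ψ s + ψ t)/2)
    (h0 : ψ 0 = 0) (h1 : ψ 1 = 0) : ∀ t ∈ Icc (0:ℝ) 1, ψ t ≤ 0 := by
  obtain ⟨μ, hμmem, hmax⟩ := isCompact_Icc.exists_isMaxOn (s := Icc (0:ℝ) 1)
    ⟨0, by norm_num⟩ hcont
  intro t ht
  have htle : ψ t ≤ ψ μ := hmax ht
  rcases le_or_gt (ψ μ) 0 with hK | hK
  · linarith
  obtain ⟨hμ0, hμ1⟩ := hμmem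
  have hμ0' : 0 < μ := by
    rcases hμ0.lt_or_eq with hh | hh
    · exact hh
    · exfalso; rw [← hh] at hK; linarith
  have hμ1' : μ < 1 := by
    rcases hμ1.lt_or_eq with hh | hh
    · exact hh
    · exfalso; rw [hh] at hK; linarith
  set ε := min μ (1-μ) with hε
  have hε0 : 0 < ε := lt_min hμ0' (by linarith)
  have hmem1 : μ - ε ∈ Icc (0:ℝ) 1 := by
    constructor
    · have := min_le_left μ (1-μ); linarith
    · linarith
  have hmem2 : μ + ε ∈ Icc (0:ℝ) 1 := by
    constructor
    · linarith
    · have := min_le_right μ (1-μ); linarith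
  have hmid' := hmid (μ - ε) hmem1 (μ + ε) hmem2
  rw [show (μ - ε + (μ + ε))/2 = μ by ring] at hmid'
  have hle1 : ψ (μ - ε) ≤ ψ μ := hmax hmem1
  have hle2 : ψ (μ + ε) ≤ ψ μ := hmax hmem2
  rcases min_cases μ (1-μ) with ⟨hc, _⟩ | ⟨hc, _⟩
  · have : μ - ε = 0 := by rw [hε, hc]; ring
    rw [this, h0] at hmid'
    linarith
  · have : μ + ε = 1 := by rw [hε, hc]; ring
    rw [this, h1] at hmid'
    linarith

lemma spread_step (ψ : ℝ → ℝ)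
    (hmid : ∀ s ∈ Icc (0:ℝ) 1, ∀ t ∈ Icc (0:ℝ) 1, ψ ((s+t)/2) ≤ (ψ s + ψ t)/2)
    (hnp : ∀ t ∈ Icc (0:ℝ) 1, ψ t ≤ 0)
    {μ : ℝ} (hμ0 : 0 < μ) (hμh : μ ≤ 1/2) (hz : ψ μ = 0)
    {t : ℝ} (ht0 : 0 ≤ t) (ht : t ≤ 2*μ) : ψ t = 0 := by
  have hmem1 : t ∈ Icc (0:ℝ) 1 := ⟨ht0, by linarith⟩
  have hmem2 : 2*μ - t ∈ Icc (0:ℝ) 1 := ⟨by linarith, by linarith⟩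
  have h := hmid t hmem1 (2*μ - t) hmem2
  rw [show (t + (2*μ - t))/2 = μ by ring, hz] at h
  have h1 := hnp t hmem1
  have h2 := hnp (2*μ - t) hmem2
  linarith

lemma spread_half (ψ : ℝ → ℝ)
    (hmid : ∀ s ∈ Icc (0:ℝ) 1, ∀ t ∈ Icc (0:ℝ) 1, ψ ((s+t)/2) ≤ (ψ s + ψ t)/2)
    (hnp : ∀ t ∈ Icc (0:ℝ) 1, ψ t ≤ 0)
    {μ : ℝ} (hμ0 : 0 < μ) (hμh : μ ≤ 1/2) (hz : ψ μ = 0) : ψ (1/2) = 0 := by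
  have key : ∀ n : ℕ, ψ (min (2^n * μ) (1/2)) = 0 := by
    intro n
    induction n with
    | zero => rw [pow_zero, one_mul, min_eq_left hμh]; exact hz
    | succ n ih =>
      have hνpos : 0 < min (2^n * μ) (1/2) := lt_min (by positivity) (by norm_num)
      have hνle : min (2^n * μ) (1/2) ≤ 1/2 := min_le_right _ _
      apply spread_step ψ hmid hnp hνpos hνle ih
      · positivity
      · rcases le_or_gt ((2:ℝ)^n * μ) (1/2) with hc | hc
        · rw [min_eq_left hc]
          have : min ((2:ℝ)^(n+1) * μ) (1/2) ≤ 2^(n+1)*μ := min_le_left _ _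
          calc min ((2:ℝ)^(n+1) * μ) (1/2) ≤ 2^(n+1)*μ := this
            _ = 2*(2^n*μ) := by ring
        · rw [min_eq_right hc.le]
          have : min ((2:ℝ)^(n+1) * μ) (1/2) ≤ 1/2 := min_le_right _ _
          linarith
  obtain ⟨n, hn⟩ := pow_unbounded_of_one_lt (R := ℝ) (1/(2*μ)) one_lt_two
  have h2 : (1:ℝ)/2 ≤ 2^n * μ := by
    rw [div_lt_iff₀ (by positivity)] at hn
    nlinarith [hn]
  have := key n
  rwa [min_eq_right h2] at this


lemma pin_smul_btw (M : SL(2,ℝ)) {X Y P : ℍ} (hX : (M•X).re = 0) (hY : (M•Y).re = 0)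
    (h : dist X P + dist P Y = dist X Y) : (M•P).re = 0 := by
  have h' : dist (M•X) (M•P) + dist (M•P) (M•Y) = dist (M•X) (M•Y) := by
    rw [dist_smul, dist_smul, dist_smul]; exact h
  have h2 := (pin_btw (x := M•X) (y := M•Y) (p := M•P) (hX.trans hY.symm) h').1
  rw [h2, hX]

lemma pin_smul_ext (M : SL(2,ℝ)) {X Y P : ℍ} (hX : (M•X).re = 0) (hY : (M•Y).re = 0)
    (hne : X ≠ Y) (h : dist X P = dist X Y + dist Y P) : (M•P).re = 0 := by
  have h' : dist (M•X) (M•P) = dist (M•X) (M•Y) + dist (M•Y) (M•P) := by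
    rw [dist_smul, dist_smul, dist_smul]; exact h
  have h2 := pin_ext (x := M•X) (y := M•Y) (p := M•P) (hX.trans hY.symm)
    (fun hc => hne (MulAction.injective M hc)) h'
  rw [h2, hX]

end ColHyp

open ColHyp in
/-- Equality case in the convexity of hyperbolic distance along constant-speed
geodesic segments: if for some `lam ∈ (0,1)` the convexity inequality is an
equality, then the four endpoints `f 0`, `f 1`, `g 0`, `g 1` all lie on a common
geodesic line of the hyperbolic plane (the range of an isometric embedding
`γ : ℝ → ℍ`). -/
theorem collinear_of_dist_eq (f g : ℝ → UpperHalfPlane) (a b : ℝ)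
    (ha : 0 ≤ a) (hb : 0 ≤ b)
    (hf : ∀ s ∈ Set.Icc (0 : ℝ) 1, ∀ t ∈ Set.Icc (0 : ℝ) 1,
      dist (f s) (f t) = a * |s - t|)
    (hg : ∀ s ∈ Set.Icc (0 : ℝ) 1, ∀ t ∈ Set.Icc (0 : ℝ) 1,
      dist (g s) (g t) = b * |s - t|)
    (lam : ℝ) (hlam : lam ∈ Set.Ioo (0 : ℝ) 1)
    (heq : dist (f lam) (g lam) =
      (1 - lam) * dist (f 0) (g 0) + lam * dist (f 1) (g 1)) :
    ∃ γ : ℝ → UpperHalfPlane, Isometry γ ∧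
      f 0 ∈ Set.range γ ∧ f 1 ∈ Set.range γ ∧
      g 0 ∈ Set.range γ ∧ g 1 ∈ Set.range γ := by
  obtain ⟨hlam0, hlam1⟩ := hlam
  have h01 : (0:ℝ) ∈ Icc (0:ℝ) 1 := by norm_num
  have h11 : (1:ℝ) ∈ Icc (0:ℝ) 1 := by norm_num
  have hhmem : (1/2:ℝ) ∈ Icc (0:ℝ) 1 := by norm_num
  have hlmem : lam ∈ Icc (0:ℝ) 1 := ⟨hlam0.le, hlam1.le⟩
  -- midpoint facts for f and g
  have habs2 : ∀ s t : ℝ, |s - (s+t)/2| = |s - t|/2 := by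
    intro s t; rw [show s - (s+t)/2 = (s-t)/2 by ring, abs_div]; norm_num [abs_of_pos] <;> ring
  have habs3 : ∀ s t : ℝ, |(s+t)/2 - t| = |s - t|/2 := by
    intro s t; rw [show (s+t)/2 - t = (s-t)/2 by ring, abs_div]; norm_num [abs_of_pos] <;> ring
  have hmidf : ∀ s ∈ Icc (0:ℝ) 1, ∀ t ∈ Icc (0:ℝ) 1,
      dist (f s) (f ((s+t)/2)) = dist (f s) (f t) / 2 ∧
      dist (f ((s+t)/2)) (f t) = dist (f s) (f t) / 2 := by
    intro s hs t ht
    have hm : (s+t)/2 ∈ Icc (0:ℝ) 1 := ⟨by have := hs.1; have := ht.1; linarith,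
      by have := hs.2; have := ht.2; linarith⟩
    rw [hf s hs _ hm, hf _ hm t ht, hf s hs t ht, habs2, habs3]
    constructor <;> ring
  have hmidg : ∀ s ∈ Icc (0:ℝ) 1, ∀ t ∈ Icc (0:ℝ) 1,
      dist (g s) (g ((s+t)/2)) = dist (g s) (g t) / 2 ∧
      dist (g ((s+t)/2)) (g t) = dist (g s) (g t) / 2 := by
    intro s hs t ht
    have hm : (s+t)/2 ∈ Icc (0:ℝ) 1 := ⟨by have := hs.1; have := ht.1; linarith,
      by have := hs.2; have := ht.2; linarith⟩
    rw [hg s hs _ hm, hg _ hm t ht, hg s hs t ht, habs2, habs3]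
    constructor <;> ring
  -- midpoint convexity of the distance function
  have hconv : ∀ s ∈ Icc (0:ℝ) 1, ∀ t ∈ Icc (0:ℝ) 1,
      dist (f ((s+t)/2)) (g ((s+t)/2)) ≤ (dist (f s) (g s) + dist (f t) (g t))/2 := by
    intro s hs t ht
    obtain ⟨r, hr1, hr2⟩ := exists_midpoint (f t) (g s)
    obtain ⟨hf1, hf2⟩ := hmidf s hs t ht
    obtain ⟨hg1, hg2⟩ := hmidg s hs t ht
    have m1 := (midline (f t) (f s) (g s) (f ((s+t)/2)) r
      (by rw [dist_comm (f t) (f ((s+t)/2)), dist_comm (f t) (f s)]; exact hf2)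
      (by rw [dist_comm (f ((s+t)/2)) (f s), dist_comm (f t) (f s)]; exact hf1)
      hr1 hr2).1
    have m2 := (midline (g s) (f t) (g t) r (g ((s+t)/2))
      (by rw [dist_comm (g s) r, dist_comm (g s) (f t)]; exact hr2)
      (by rw [dist_comm r (f t), dist_comm (g s) (f t)]; exact hr1)
      hg1 hg2).1
    have tri := dist_triangle (f ((s+t)/2)) r (g ((s+t)/2))
    have c1 : dist (f s) (g s) = dist (f s) (g s) := rfl
    linarith [m1, m2, tri]
  -- the auxiliary function ψ
  set ψ : ℝ → ℝ := fun t =>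
    dist (f t) (g t) - ((1 - t) * dist (f 0) (g 0) + t * dist (f 1) (g 1)) with hψ
  have hmidψ : ∀ s ∈ Icc (0:ℝ) 1, ∀ t ∈ Icc (0:ℝ) 1, ψ ((s+t)/2) ≤ (ψ s + ψ t)/2 := by
    intro s hs t ht
    have hc := hconv s hs t ht
    simp only [hψ]
    ring_nf
    ring_nf at hc
    linarith [hc]
  have h0 : ψ 0 = 0 := by simp only [hψ]; ring
  have h1 : ψ 1 = 0 := by simp only [hψ]; ring
  have hψlam : ψ lam = 0 := by simp only [hψ]; rw [heq]; ring
  have hcont : ContinuousOn ψ (Icc 0 1) := by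
    rw [hψ]
    apply ContinuousOn.sub
    · have hlip : LipschitzOnWith ((a+b).toNNReal) (fun t => dist (f t) (g t)) (Icc 0 1) := by
        apply LipschitzOnWith.of_dist_le_mul
        intro s hs t ht
        have hdd : dist (dist (f s) (g s)) (dist (f t) (g t))
            ≤ dist (f s) (f t) + dist (g s) (g t) := dist_dist_dist_le _ _ _ _
        rw [hf s hs t ht, hg s hs t ht] at hdd
        have hco : ((a+b).toNNReal : ℝ) = a + b := Real.coe_toNNReal _ (by linarith)
        rw [hco, Real.dist_eq s t]
        calc dist (dist (f s) (g s)) (dist (f t) (g t)) ≤ a * |s-t| + b * |s-t| := hdd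
          _ = (a+b) * |s-t| := by ring
      exact hlip.continuousOn
    · exact (((continuous_const.sub continuous_id).mul continuous_const).add
        (continuous_id.mul continuous_const)).continuousOn
  have hnp := nonpos_of_midconv ψ hcont hmidψ h0 h1
  have hψhalf : ψ (1/2) = 0 := by
    rcases le_or_gt lam (1/2) with hle | hgt
    · exact spread_half ψ hmidψ hnp hlam0 hle hψlam
    · set χ : ℝ → ℝ := fun t => ψ (1 - t) with hχ
      have hmidχ : ∀ s ∈ Icc (0:ℝ) 1, ∀ t ∈ Icc (0:ℝ) 1, χ ((s+t)/2) ≤ (χ s + χ t)/2 := by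
        intro s hs t ht
        have hs' : 1 - s ∈ Icc (0:ℝ) 1 := ⟨by have := hs.2; linarith,
          by have := hs.1; linarith⟩
        have ht' : 1 - t ∈ Icc (0:ℝ) 1 := ⟨by have := ht.2; linarith,
          by have := ht.1; linarith⟩
        have := hmidψ (1-s) hs' (1-t) ht'
        simp only [hχ]
        rw [show 1 - (s+t)/2 = ((1-s)+(1-t))/2 by ring]
        exact this
      have hnpχ : ∀ t ∈ Icc (0:ℝ) 1, χ t ≤ 0 := by
        intro t ht
        have ht' : 1 - t ∈ Icc (0:ℝ) 1 := ⟨by have := ht.2; linarith,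
          by have := ht.1; linarith⟩
        exact hnp _ ht'
      have hχlam : χ (1 - lam) = 0 := by
        simp only [hχ]; rw [show 1 - (1 - lam) = lam by ring]; exact hψlam
      have hres := spread_half χ hmidχ hnpχ (by linarith) (by linarith) hχlam
      simp only [hχ] at hres
      rwa [show 1 - (1/2 : ℝ) = 1/2 by norm_num] at hres
  have heq2 : dist (f (1/2)) (g (1/2)) = (dist (f 0) (g 0) + dist (f 1) (g 1))/2 := by
    simp only [hψ] at hψhalf
    linarith [hψhalf]
  -- extract the equality case at 1/2
  obtain ⟨r, hr1, hr2⟩ := exists_midpoint (f 1) (g 0)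
  have ef1 : dist (f 1) (f (1/2)) = dist (f 1) (f 0) / 2 := by
    rw [hf 1 h11 (1/2) hhmem, hf 1 h11 0 h01]; norm_num [abs_of_pos] <;> ring
  have ef2 : dist (f (1/2)) (f 0) = dist (f 1) (f 0) / 2 := by
    rw [hf (1/2) hhmem 0 h01, hf 1 h11 0 h01]; norm_num [abs_of_pos] <;> ring
  have eg1 : dist (g 0) (g (1/2)) = dist (g 0) (g 1) / 2 := by
    rw [hg 0 h01 (1/2) hhmem, hg 0 h01 1 h11]; norm_num [abs_of_pos] <;> ring
  have eg2 : dist (g (1/2)) (g 1) = dist (g 0) (g 1) / 2 := by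
    rw [hg (1/2) hhmem 1 h11, hg 0 h01 1 h11]; norm_num [abs_of_pos] <;> ring
  have M1 := midline (f 1) (f 0) (g 0) (f (1/2)) r ef1 ef2 hr1 hr2
  have M2 := midline (g 0) (f 1) (g 1) r (g (1/2))
    (by rw [dist_comm (g 0) r, dist_comm (g 0) (f 1)]; exact hr2)
    (by rw [dist_comm r (f 1), dist_comm (g 0) (f 1)]; exact hr1)
    eg1 eg2
  have tri := dist_triangle (f (1/2)) r (g (1/2))
  have eqA : dist (f (1/2)) r = dist (f 0) (g 0)/2 := by linarith [M1.1, M2.1]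
  have eqB : dist r (g (1/2)) = dist (f 1) (g 1)/2 := by linarith [M1.1, M2.1]
  have eqC : dist (f (1/2)) (g (1/2)) = dist (f (1/2)) r + dist r (g (1/2)) := by
    linarith [M1.1, M2.1]
  have T1 := M1.2 eqA
  have T2 := M2.2 eqB
  by_cases hfg : f 1 = g 0
  · -- degenerate middle point
    by_cases ha0 : a = 0
    · have hf01 : f 0 = f 1 := by
        have hdd : dist (f 0) (f 1) = 0 := by rw [hf 0 h01 1 h11, ha0]; ring
        exact dist_eq_zero.1 hdd
      obtain ⟨M, hz1, hz2⟩ := exists_normalize (g 0) (g 1)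
      obtain ⟨γ, hiso, hmem⟩ := exists_line_of_normalized M
      exact ⟨γ, hiso, by rw [hf01, hfg]; exact hmem _ hz1,
        by rw [hfg]; exact hmem _ hz1, hmem _ hz1, hmem _ hz2⟩
    by_cases hb0 : b = 0
    · have hg01 : g 1 = g 0 := by
        have hdd : dist (g 1) (g 0) = 0 := by rw [hg 1 h11 0 h01, hb0]; ring
        exact dist_eq_zero.1 hdd
      obtain ⟨M, hz1, hz2⟩ := exists_normalize (f 0) (f 1)
      obtain ⟨γ, hiso, hmem⟩ := exists_line_of_normalized M
      exact ⟨γ, hiso, hmem _ hz1, hmem _ hz2,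
        by rw [← hfg]; exact hmem _ hz2, by rw [hg01, ← hfg]; exact hmem _ hz2⟩
    · -- a ≠ 0, b ≠ 0
      have hrf1 : r = f 1 := by
        have hdd : dist (f 1) r = 0 := by
          rw [hr1, hfg, dist_self]; ring
        exact (dist_eq_zero.1 hdd).symm
      have e1 : dist (f (1/2)) (f 1) = a/2 := by
        rw [hf (1/2) hhmem 1 h11]; norm_num [abs_of_pos] <;> ring
      have e2 : dist (f 1) (f 0) = a := by rw [hf 1 h11 0 h01]; norm_num [abs_of_pos] <;> ring
      have e6 : dist (f (1/2)) (f 0) = a/2 := by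
        rw [hf (1/2) hhmem 0 h01]; norm_num [abs_of_pos] <;> ring
      have e3 : dist (f 1) (g (1/2)) = b/2 := by
        rw [hfg, hg 0 h01 (1/2) hhmem]; norm_num [abs_of_pos] <;> ring
      have e4 : dist (f 1) (g 1) = b := by rw [hfg, hg 0 h01 1 h11]; norm_num [abs_of_pos] <;> ring
      have e5 : dist (g (1/2)) (g 1) = b/2 := by
        rw [hg (1/2) hhmem 1 h11]; norm_num [abs_of_pos] <;> ring
      have hne1 : f (1/2) ≠ f 1 := by
        intro hh
        rw [hh, dist_self] at e1
        have : a ≠ 0 := ha0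
        apply this; linarith
      have hne2 : f 1 ≠ g (1/2) := by
        intro hh
        rw [hh, dist_self] at e3
        apply hb0; linarith
      obtain ⟨M, hz1, hz2⟩ := exists_normalize (f (1/2)) (f 1)
      have p0 : (M • f 0).re = 0 := by
        apply pin_smul_ext M hz2 hz1 hne1.symm
        rw [e2, dist_comm (f 1) (f (1/2)), e1, e6]; ring
      have pgm : (M • g (1/2)).re = 0 := by
        apply pin_smul_ext M hz1 hz2 hne1
        rw [← hrf1]; exact eqC
      have pg1 : (M • g 1).re = 0 := by
        apply pin_smul_ext M hz2 pgm hne2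
        rw [e4, e3, e5]; ring
      obtain ⟨γ, hiso, hmem⟩ := exists_line_of_normalized M
      exact ⟨γ, hiso, hmem _ p0, hmem _ hz2, by rw [← hfg]; exact hmem _ hz2, hmem _ pg1⟩
  · -- main case : f 1 ≠ g 0
    obtain ⟨M, hz1, hz2⟩ := exists_normalize (f 1) (g 0)
    have p0 : (M • f 0).re = 0 := by
      rcases T1 with t | t | t
      · exact pin_smul_ext M hz1 hz2 hfg t
      · apply pin_smul_btw M hz1 hz2
        linarith [t]
      · apply pin_smul_ext M hz2 hz1 (Ne.symm hfg)
        rw [dist_comm (g 0) (f 0), dist_comm (g 0) (f 1), dist_comm (f 1) (f 0)]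
        linarith [t]
    have p1 : (M • g 1).re = 0 := by
      rcases T2 with t | t | t
      · apply pin_smul_btw M hz1 hz2
        rw [dist_comm (f 1) (g 1), dist_comm (g 1) (g 0), dist_comm (f 1) (g 0)]
        linarith [t]
      · exact pin_smul_ext M hz2 hz1 (Ne.symm hfg) t
      · exact pin_smul_ext M hz1 hz2 hfg t
    obtain ⟨γ, hiso, hmem⟩ := exists_line_of_normalized M
    exact ⟨γ, hiso, hmem _ p0, hmem _ hz1, hmem _ hz2, hmem _ p1⟩

end
end

section
/- The map (a,b,c) ↦ p̃(a,b,c) is injective on the set {(a,b,c) ∈ ℝ³ : a ≥ b ≥ c > 0 and a + b + c = 1}; that is, if a ≥ b ≥ c > 0, a' ≥ b' ≥ c' > 0, a + b + c = 1 = a' + b' + c' and p̃(a,b,c) = p̃(a',b',c'), then (a,b,c) = (a',b',c'). -/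
open Complex

/-- The point of the upper half-plane associated to the semi-regular hexagon with
consecutive side lengths `a`, `b`, `c`. -/
noncomputable def ptilde (a b c : ℝ) : ℂ :=
  ⟨(2 * c ^ 2 - a * b + a * c + b * c) / (2 * (b ^ 2 + c ^ 2 + b * c)),
    Real.sqrt 3 / 2 * ((a * b + b * c + a * c) / (b ^ 2 + c ^ 2 + b * c))⟩

/-- The map `p̃` is injective on normalized ordered triples:
if `a ≥ b ≥ c > 0`, `a' ≥ b' ≥ c' > 0`, `a + b + c = 1 = a' + b' + c'` and
`p̃(a,b,c) = p̃(a',b',c')`, then `(a,b,c) = (a',b',c')`. -/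
theorem ptilde_injOn (a b c a' b' c' : ℝ)
    (hab : a ≥ b) (hbc : b ≥ c) (hc : c > 0)
    (hab' : a' ≥ b') (hbc' : b' ≥ c') (hc' : c' > 0)
    (hsum : a + b + c = 1) (hsum' : a' + b' + c' = 1)
    (heq : ptilde a b c = ptilde a' b' c') :
    (a, b, c) = (a', b', c') := by
  have hb : b > 0 := lt_of_lt_of_le hc hbc
  have hb' : b' > 0 := lt_of_lt_of_le hc' hbc'
  have hQ : b ^ 2 + c ^ 2 + b * c > 0 := by positivity
  have hQ' : b' ^ 2 + c' ^ 2 + b' * c' > 0 := by positivity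
  have h1 : (2 * c ^ 2 - a * b + a * c + b * c) / (2 * (b ^ 2 + c ^ 2 + b * c))
      = (2 * c' ^ 2 - a' * b' + a' * c' + b' * c') / (2 * (b' ^ 2 + c' ^ 2 + b' * c')) :=
    congrArg Complex.re heq
  have h2' : Real.sqrt 3 / 2 * ((a * b + b * c + a * c) / (b ^ 2 + c ^ 2 + b * c))
      = Real.sqrt 3 / 2 * ((a' * b' + b' * c' + a' * c') / (b' ^ 2 + c' ^ 2 + b' * c')) :=
    congrArg Complex.im heq
  have hs3 : Real.sqrt 3 / 2 ≠ 0 := by positivity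
  have h2 := mul_left_cancel₀ hs3 h2'
  have ha : a = 1 - b - c := by linarith
  have ha' : a' = 1 - b' - c' := by linarith
  subst ha ha'
  rw [div_eq_div_iff (by positivity) (by positivity)] at h1 h2
  have E1 : (c - b) * (b' ^ 2 + c' ^ 2 + b' * c') = (c' - b') * (b ^ 2 + c ^ 2 + b * c) := by
    linear_combination h1 / 2
  have E2 : (b + c) * (b' ^ 2 + c' ^ 2 + b' * c') = (b' + c') * (b ^ 2 + c ^ 2 + b * c) := by
    linear_combination h2
  have hbQ : b' * (b ^ 2 + c ^ 2 + b * c) = b * (b' ^ 2 + c' ^ 2 + b' * c') := by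
    linear_combination (E1 - E2) / 2
  have hcQ : c' * (b ^ 2 + c ^ 2 + b * c) = c * (b' ^ 2 + c' ^ 2 + b' * c') := by
    linear_combination -(E1 + E2) / 2
  have key : (b' ^ 2 + c' ^ 2 + b' * c') * (b ^ 2 + c ^ 2 + b * c) ^ 2
      = (b' ^ 2 + c' ^ 2 + b' * c') ^ 2 * (b ^ 2 + c ^ 2 + b * c) := by
    linear_combination (b' * (b ^ 2 + c ^ 2 + b * c) + b * (b' ^ 2 + c' ^ 2 + b' * c')) * hbQ
      + (c' * (b ^ 2 + c ^ 2 + b * c) + c * (b' ^ 2 + c' ^ 2 + b' * c')) * hcQ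
      + (c' * (b ^ 2 + c ^ 2 + b * c)) * hbQ + (b * (b' ^ 2 + c' ^ 2 + b' * c')) * hcQ
  have hQQ : b ^ 2 + c ^ 2 + b * c = b' ^ 2 + c' ^ 2 + b' * c' := by
    nlinarith [mul_pos hQ hQ']
  have hbb : b = b' := by
    have := hbQ
    rw [hQQ] at this
    exact (mul_right_cancel₀ (ne_of_gt hQ') this).symm
  have hcc : c = c' := by
    have := hcQ
    rw [hQQ] at this
    exact (mul_right_cancel₀ (ne_of_gt hQ') this).symm
  rw [Prod.mk.injEq, Prod.mk.injEq]
  exact ⟨by rw [hbb, hcc], hbb, hcc⟩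
end

section
/- For every complex number z with Im z > 0, one has (1 + |z|² − Re z + √3·Im z)/Im z ≥ 2√3, with equality if and only if z = 1/2 + (√3/2)·i. Equivalently, the length function L(z) = √((1 + |z|² − Re z + √3·Im z)/Im z) attains its unique global minimum √2·3^{1/4} at the hexagonal point z = e^{iπ/3}. -/
open Complex

/-- For every `z` in the upper half-plane,
`(1 + |z|² − Re z + √3·Im z)/Im z ≥ 2√3`, with equality if and only if
`z = 1/2 + (√3/2)·i` (the hexagonal point `e^{iπ/3}`).  Equivalently, the
length function `L(z) = √((1 + |z|² − Re z + √3·Im z)/Im z)` attains its unique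
global minimum `√2·3^{1/4}` at the hexagonal point. -/
theorem length_function_min (z : ℂ) (hz : 0 < z.im) :
    2 * Real.sqrt 3 ≤ (1 + ‖z‖ ^ 2 - z.re + Real.sqrt 3 * z.im) / z.im ∧
      ((1 + ‖z‖ ^ 2 - z.re + Real.sqrt 3 * z.im) / z.im = 2 * Real.sqrt 3 ↔
        z = (1 / 2 : ℂ) + (Real.sqrt 3 / 2 : ℝ) * Complex.I) := by
  set x := z.re with hx
  set y := z.im with hy
  have habs : ‖z‖ ^ 2 = x ^ 2 + y ^ 2 := by
    rw [Complex.sq_norm, Complex.normSq_apply]; ring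
  have hs3 : Real.sqrt 3 ^ 2 = 3 := Real.sq_sqrt (by norm_num)
  have key : 1 + ‖z‖ ^ 2 - x + Real.sqrt 3 * y - 2 * Real.sqrt 3 * y
      = (x - 1/2) ^ 2 + (y - Real.sqrt 3 / 2) ^ 2 := by
    rw [habs]; nlinarith [hs3]
  constructor
  · rw [le_div_iff₀ hz]
    nlinarith [sq_nonneg (x - 1/2), sq_nonneg (y - Real.sqrt 3 / 2)]
  · rw [div_eq_iff (ne_of_gt hz)]
    constructor
    · intro h
      have h0 : (x - 1/2) ^ 2 + (y - Real.sqrt 3 / 2) ^ 2 = 0 := by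
        rw [← key]; linarith
      have hx0 : x = 1/2 := by nlinarith [sq_nonneg (x - 1/2), sq_nonneg (y - Real.sqrt 3 / 2)]
      have hy0 : y = Real.sqrt 3 / 2 := by
        nlinarith [sq_nonneg (x - 1/2), sq_nonneg (y - Real.sqrt 3 / 2)]
      apply Complex.ext <;> simp [← hx, ← hy, hx0, hy0]
    · intro h
      have hre : x = 1/2 := by rw [hx, h]; simp
      have him : y = Real.sqrt 3 / 2 := by rw [hy, h]; simp
      rw [habs, hre, him]; nlinarith [hs3]
end

section
/- For every complex number z with Im z > 0, one has (1 + |z|² − |Re z| + √3·Im z)/Im z ≥ 2√3, with equality if and only if z = 1/2 + (√3/2)·i or z = −1/2 + (√3/2)·i. Equivalently, the spine systole S(z) = √((1 + |z|² − |Re z| + √3·Im z)/Im z) attains its global minimum √2·3^{1/4} exactly at the two points representing the hexagonal torus. -/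
open Complex

/-- For every `z` in the upper half-plane,
`(1 + |z|² − |Re z| + √3·Im z)/Im z ≥ 2√3`, with equality if and only if
`z = 1/2 + (√3/2)·i` or `z = −1/2 + (√3/2)·i`.  Equivalently, the spine systole
`S(z) = √((1 + |z|² − |Re z| + √3·Im z)/Im z)` attains its global minimum
`√2·3^{1/4}` exactly at the two points representing the hexagonal torus. -/
theorem spine_systole_min (z : ℂ) (hz : 0 < z.im) :
    2 * Real.sqrt 3 ≤ (1 + ‖z‖ ^ 2 - |z.re| + Real.sqrt 3 * z.im) / z.im ∧
      ((1 + ‖z‖ ^ 2 - |z.re| + Real.sqrt 3 * z.im) / z.im = 2 * Real.sqrt 3 ↔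
        z = (1 / 2 : ℂ) + (Real.sqrt 3 / 2 : ℝ) * Complex.I ∨
          z = -(1 / 2 : ℂ) + (Real.sqrt 3 / 2 : ℝ) * Complex.I) := by
  have hs : Real.sqrt 3 ^ 2 = 3 := Real.sq_sqrt (by norm_num)
  have habs : ‖z‖ ^ 2 = z.re ^ 2 + z.im ^ 2 := by
    rw [Complex.sq_norm, Complex.normSq_apply]; ring
  have hre : |z.re| ^ 2 = z.re ^ 2 := sq_abs _
  constructor
  · rw [le_div_iff₀ hz]
    nlinarith [sq_nonneg (|z.re| - 1/2), sq_nonneg (z.im - Real.sqrt 3 / 2)]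
  · rw [div_eq_iff (ne_of_gt hz)]
    constructor
    · intro h
      have h2 : |z.re| = 1/2 := by
        nlinarith [sq_nonneg (|z.re| - 1/2), sq_nonneg (z.im - Real.sqrt 3 / 2),
          abs_nonneg z.re]
      have h3 : z.im = Real.sqrt 3 / 2 := by
        nlinarith [sq_nonneg (|z.re| - 1/2), sq_nonneg (z.im - Real.sqrt 3 / 2),
          Real.sqrt_nonneg 3]
      rcases (abs_eq (by norm_num : (0:ℝ) ≤ 1/2)).mp h2 with h4 | h4
      · left
        apply Complex.ext <;> simp [h3, h4]
      · right
        apply Complex.ext <;> simp [h3, h4]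
    · rintro (h | h) <;>
      · rw [h]
        simp only [Complex.add_re, Complex.add_im, Complex.neg_re, Complex.neg_im,
          Complex.mul_re, Complex.mul_im, Complex.I_re, Complex.I_im,
          Complex.ofReal_re, Complex.ofReal_im, Complex.one_re, Complex.one_im,
          Complex.sq_norm, Complex.normSq_apply]
        norm_num
        nlinarith [Real.sqrt_nonneg 3]
end

section
/- For all real numbers a, b, c > 0, if z = p̃(a,b,c), then (1 + |z|² − Re z + √3·Im z)/Im z = 2(a + b + c)²/(√3·(ab + bc + ca)). Equivalently, the normalized length L(p̃(a,b,c)) of the spine with side lengths a, b, c equals the perimeter a + b + c of the semi-regular hexagon divided by the square root of its area (√3/2)(ab + bc + ca). -/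
open Complex

lemma key_rat (a b c s : ℝ) (h3 : s^2 = 3) :
    1 + (((2*c^2 - a*b + a*c + b*c)/(2*(b^2+c^2+b*c)))^2 + (s/2*((a*b+b*c+a*c)/(b^2+c^2+b*c)))^2)
      - (2*c^2 - a*b + a*c + b*c)/(2*(b^2+c^2+b*c))
      + s * (s/2*((a*b+b*c+a*c)/(b^2+c^2+b*c)))
    = (a+b+c)^2/(b^2+c^2+b*c) ∨ (b^2+c^2+b*c) = 0 := by
  rcases eq_or_ne (b^2+c^2+b*c) 0 with h | hD
  · exact Or.inr h
  left
  set X := (a*b+b*c+a*c)/(b^2+c^2+b*c) with hX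
  have e1 : (s/2*X)^2 = 3/4*X^2 := by rw [mul_pow, div_pow, h3]; ring
  have e2 : s * (s/2*X) = 3/2*X := by
    have : s * (s/2*X) = s^2 * (X/2) := by ring
    rw [this, h3]; ring
  rw [e1, e2, hX]
  have hD' : b^2+c^2+c*b ≠ 0 := by rwa [mul_comm c b]
  field_simp
  ring

/-- For positive `a`, `b`, `c` and `z = p̃(a,b,c)` one has
`(1 + |z|² − Re z + √3·Im z)/Im z = 2(a+b+c)²/(√3·(ab+bc+ca))`; equivalently,
the normalized length `L(p̃(a,b,c))` equals the perimeter `a + b + c` of the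
semi-regular hexagon divided by the square root of its area `(√3/2)(ab+bc+ca)`. -/
theorem length_ptilde (a b c : ℝ) (ha : 0 < a) (hb : 0 < b) (hc : 0 < c) :
    (1 + ‖ptilde a b c‖ ^ 2 - (ptilde a b c).re +
          Real.sqrt 3 * (ptilde a b c).im) / (ptilde a b c).im =
        2 * (a + b + c) ^ 2 / (Real.sqrt 3 * (a * b + b * c + a * c)) ∧
      Real.sqrt ((1 + ‖ptilde a b c‖ ^ 2 - (ptilde a b c).re +
          Real.sqrt 3 * (ptilde a b c).im) / (ptilde a b c).im) =
        (a + b + c) / Real.sqrt (Real.sqrt 3 / 2 * (a * b + b * c + a * c)) := by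
  have hD : (0:ℝ) < b ^ 2 + c ^ 2 + b * c := by positivity
  have hS : (0:ℝ) < a * b + b * c + a * c := by positivity
  have hs3 : (0:ℝ) < Real.sqrt 3 := Real.sqrt_pos.mpr (by norm_num)
  have h3 : Real.sqrt 3 ^ 2 = 3 := Real.sq_sqrt (by norm_num)
  have him : (ptilde a b c).im = Real.sqrt 3 / 2 * ((a*b+b*c+a*c)/(b^2+c^2+b*c)) := rfl
  have hre : (ptilde a b c).re = (2*c^2 - a*b + a*c + b*c)/(2*(b^2+c^2+b*c)) := rfl
  have habs : ‖ptilde a b c‖ ^ 2 = (ptilde a b c).re^2 + (ptilde a b c).im^2 := by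
    rw [Complex.sq_norm, Complex.normSq_apply]; ring
  have key : 1 + ‖ptilde a b c‖ ^ 2 - (ptilde a b c).re +
      Real.sqrt 3 * (ptilde a b c).im = (a+b+c)^2/(b^2+c^2+b*c) := by
    rw [habs, hre, him]
    rcases key_rat a b c (Real.sqrt 3) h3 with h | h
    · exact h
    · exact absurd h hD.ne'
  have h1 : (1 + ‖ptilde a b c‖ ^ 2 - (ptilde a b c).re +
          Real.sqrt 3 * (ptilde a b c).im) / (ptilde a b c).im =
        2 * (a + b + c) ^ 2 / (Real.sqrt 3 * (a * b + b * c + a * c)) := by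
    rw [key, him]
    rw [div_eq_div_iff (by positivity) (by positivity)]
    field_simp
  refine ⟨h1, ?_⟩
  rw [h1]
  have h2 : 2 * (a + b + c) ^ 2 / (Real.sqrt 3 * (a * b + b * c + a * c)) =
      (a+b+c)^2 / (Real.sqrt 3 / 2 * (a * b + b * c + a * c)) := by
    rw [div_eq_div_iff (by positivity) (by positivity)]; ring
  rw [h2, Real.sqrt_div (sq_nonneg _), Real.sqrt_sq (by positivity)]
end
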